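/- For every integer σ ≥ 2, the dihedral group D_{σ−1} = ⟨x, y | x^{σ−1}, y², yxyx⟩ of order 2(σ − 1) admits a (0; 2, 2, 2, 2, 2, 2)-generating vector, namely (y, y, xy, xy, y, y); consequently (0; 2, 2, 2, 2, 2, 2) is an actual signature for every genus σ ≥ 2. -/

import Mathlib

/-- The Riemann–Hurwitz formula `σ - 1 = N (h - 1 + (1/2) Σ (1 - 1/mᵢ))`
as an equality of rational numbers. -/
def RHFormula (σ N h : ℕ) (m : List ℕ) : Prop :=
  (σ : ℚ) - 1 = (N : ℚ) * ((h : ℚ) - 1 + (1 / 2) * (m.map (fun x => 1 - 1 / (x : ℚ))).sum)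

/-- `(h; m₁, …, m_r)` is a potential signature for genus `σ`: each `mᵢ ≥ 2` and there is
a positive integer `N` with `mᵢ ∣ N` for all `i` satisfying the Riemann–Hurwitz formula. -/
def IsPotentialSignature (σ h : ℕ) (m : List ℕ) : Prop :=
  (∀ x ∈ m, 2 ≤ x) ∧ ∃ N : ℕ, 0 < N ∧ (∀ x ∈ m, x ∣ N) ∧ RHFormula σ N h m

/-- The set `P_σ` of potential signatures for genus `σ`, as a set of pairs `(h, [m₁, …, m_r])`. -/
def PotSig (σ : ℕ) : Set (ℕ × List ℕ) := {p | IsPotentialSignature σ p.1 p.2}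
open scoped commutatorElement in
/-- `(a, b, c)` is an `(h; m₁, …, m_r)`-generating vector for the group `G`:
the elements generate `G`, the order of `cᵢ` is `mᵢ`, and
`∏ ⁅aᵢ, bᵢ⁆ · ∏ cⱼ = 1`. -/
def IsGenVector (G : Type*) [Group G] (h : ℕ) (m : List ℕ)
    (a b : Fin h → G) (c : Fin m.length → G) : Prop :=
  Subgroup.closure (Set.range a ∪ Set.range b ∪ Set.range c) = ⊤ ∧
  (∀ i : Fin m.length, orderOf (c i) = m.get i) ∧
  (List.ofFn fun i => ⁅a i, b i⁆).prod * (List.ofFn c).prod = 1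

/-- `G` admits an `(h; m₁, …, m_r)`-generating vector. -/
def HasGenVector (G : Type*) [Group G] (h : ℕ) (m : List ℕ) : Prop :=
  ∃ (a b : Fin h → G) (c : Fin m.length → G), IsGenVector G h m a b c

/-- `(h; m₁, …, m_r)` (with all `mᵢ ≥ 2`) is an actual signature for genus `σ`: some finite
group `G` admits an `(h; m₁, …, m_r)`-generating vector and `N = |G|` satisfies the
Riemann–Hurwitz formula for genus `σ`. -/
def IsActualSignature (σ h : ℕ) (m : List ℕ) : Prop :=
  (∀ x ∈ m, 2 ≤ x) ∧
  ∃ (G : Type) (_ : Group G) (_ : Fintype G),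
    HasGenVector G h m ∧ RHFormula σ (Fintype.card G) h m

namespace DihedralGroup

variable {n : ℕ}

theorem closure_r_one_sr_zero :
    Subgroup.closure {r 1, sr 0} = (⊤ : Subgroup (DihedralGroup n)) := by
  -- lifting `i` to `ℤ` rather than using `ZMod.val` keeps this valid for `n = 0`
  have hr : ∀ i : ZMod n, r i ∈ Subgroup.closure {r 1, sr 0} := fun i => by
    rw [← ZMod.intCast_zmod_cast i, ← r_one_zpow]
    exact zpow_mem (Subgroup.subset_closure (by simp)) _
  rw [eq_top_iff]
  rintro (i | i) -
  · exact hr i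
  · rw [show sr i = r (-i) * sr 0 by simp [r_mul_sr]]
    exact mul_mem (hr _) (Subgroup.subset_closure (by simp))

theorem closure_sr_zero_r_one_mul_sr_zero :
    Subgroup.closure {sr 0, r 1 * sr 0} = (⊤ : Subgroup (DihedralGroup n)) := by
  rw [eq_top_iff, ← closure_r_one_sr_zero, Subgroup.closure_le, Set.insert_subset_iff,
    Set.singleton_subset_iff]
  refine ⟨?_, Subgroup.subset_closure (by simp)⟩
  rw [show r 1 = r 1 * sr 0 * sr 0 by rw [mul_assoc, sr_mul_self, mul_one]]
  exact mul_mem (Subgroup.subset_closure (by simp)) (Subgroup.subset_closure (by simp))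

theorem isGenVector_six_twos :
    IsGenVector (DihedralGroup n) 0 [2, 2, 2, 2, 2, 2] ![] ![]
      ![sr 0, sr 0, r 1 * sr 0, r 1 * sr 0, sr 0, sr 0] := by
  have hxy : (r 1 * sr 0 : DihedralGroup n) = sr (-1) := by simp [r_mul_sr]
  refine ⟨?_, fun i => ?_, ?_⟩
  · rw [eq_top_iff, ← closure_sr_zero_r_one_mul_sr_zero]
    refine Subgroup.closure_mono (Set.insert_subset_iff.2 ⟨?_, Set.singleton_subset_iff.2 ?_⟩)
    · exact Or.inr ⟨0, rfl⟩
    · exact Or.inr ⟨2, rfl⟩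
  · fin_cases i <;> simp [hxy, orderOf_sr]
  · simp [List.ofFn_succ, hxy]

end DihedralGroup

theorem IsGenVector.isActualSignature {G : Type} [Group G] [Fintype G] {σ h : ℕ} {m : List ℕ}
    {a b : Fin h → G} {c : Fin m.length → G} (hv : IsGenVector G h m a b c)
    (hm : ∀ x ∈ m, 2 ≤ x) (hRH : RHFormula σ (Fintype.card G) h m) :
    IsActualSignature σ h m :=
  ⟨hm, G, inferInstance, inferInstance, ⟨a, b, c, hv⟩, hRH⟩

theorem rhFormula_zero_six_twos {σ : ℕ} (hσ : 1 ≤ σ) :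
    RHFormula σ (2 * (σ - 1)) 0 [2, 2, 2, 2, 2, 2] := by
  simp only [RHFormula, Nat.cast_mul, Nat.cast_sub hσ]
  norm_num
  ring

/-- For every `σ ≥ 2`, the dihedral group of order `2(σ - 1)` admits a
`(0; 2, 2, 2, 2, 2, 2)`-generating vector, namely `(y, y, xy, xy, y, y)`; consequently
`(0; 2, 2, 2, 2, 2, 2)` is an actual signature for every genus `σ ≥ 2`. -/
theorem dihedral_genVector_six_twos (σ : ℕ) (hσ : 2 ≤ σ) :
    Nat.card (DihedralGroup (σ - 1)) = 2 * (σ - 1) ∧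
    IsGenVector (DihedralGroup (σ - 1)) 0 [2, 2, 2, 2, 2, 2] ![] ![]
      ![DihedralGroup.sr 0, DihedralGroup.sr 0,
        DihedralGroup.r 1 * DihedralGroup.sr 0, DihedralGroup.r 1 * DihedralGroup.sr 0,
        DihedralGroup.sr 0, DihedralGroup.sr 0] ∧
    IsActualSignature σ 0 [2, 2, 2, 2, 2, 2] := by
  have : NeZero (σ - 1) := ⟨by omega⟩
  have hv := DihedralGroup.isGenVector_six_twos (n := σ - 1)
  refine ⟨DihedralGroup.nat_card, hv, hv.isActualSignature (by simp) ?_⟩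
  rw [DihedralGroup.card]
  exact rhFormula_zero_six_twos (by omega)
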